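/- arXiv:1007.1635 — 5 statements merged into one kernel-verified Lean document; each statement's English description precedes it below -/
import Mathlib

section
/- A p-adic analytic function on Z_p that takes one of its values infinitely many times is constant. -/
/-!
Convergence at `1` forces `aₖ → 0`, and by compactness of `ℤ_p` the fiber `g⁻¹' {c}` has an
accumulation point `z₀`. Because the norm is ultrametric, the series can be re-expanded around
`z₀` with bounded coefficients, and the new expansion represents `g` on all of
`z₀ + ℤ_p = ℤ_p`. It is analytic at `0` and `g - c` has zeros accumulating there, so by the
identity theorem every coefficient of the re-expansion of `g - c` vanishes.
-/

open Filter Topology Finset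

lemma HasSum.update_zero_sub_mul_pow {R : Type*} [Ring R] [TopologicalSpace R]
    [IsTopologicalAddGroup R] {a : ℕ → R} {x s : R} (h : HasSum (fun k => a k * x ^ k) s)
    (c : R) : HasSum (fun k => Function.update a 0 (a 0 - c) k * x ^ k) (s - c) := by
  have h_update : (fun k => Function.update a 0 (a 0 - c) k * x ^ k) =
      Function.update (fun k => a k * x ^ k) 0 (a 0 - c) := by
    ext (_ | k) <;> simp
  have h_sum : s - c = a 0 - c - a 0 * x ^ 0 + s := by
    rw [pow_zero, mul_one]
    abel
  rw [h_update, h_sum]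
  exact h.update 0 (a 0 - c)

lemma tendsto_fst_add_snd_cofinite_atTop :
    Tendsto (fun q : ℕ × ℕ => q.1 + q.2) cofinite atTop := by
  rw [← Nat.cofinite_eq_atTop]
  refine Tendsto.cofinite_of_finite_preimage_singleton fun n => ?_
  have : (fun q : ℕ × ℕ => q.1 + q.2) ⁻¹' {n} = ↑(antidiagonal n) := by
    ext q
    simp
  rw [this]
  exact (antidiagonal n).finite_toSet

section ChangeOrigin

variable {K : Type*} [NormedField K] [IsUltrametricDist K]

/-- The coefficients of `y ↦ ∑ aₙ (x + y)ⁿ` as a power series in `y`. -/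
noncomputable def changeOriginCoeff (a : ℕ → K) (x : K) (m : ℕ) : K :=
  ∑' k, ((m + k).choose m : K) * a (m + k) * x ^ k

lemma norm_natCast_mul_mul_pow_le (N : ℕ) (b : K) {x : K} (hx : ‖x‖ ≤ 1) (k : ℕ) :
    ‖(N : K) * b * x ^ k‖ ≤ ‖b‖ := by
  rw [norm_mul, norm_mul, norm_pow]
  calc ‖(N : K)‖ * ‖b‖ * ‖x‖ ^ k ≤ 1 * ‖b‖ * 1 ^ k := by
        gcongr
        exact IsUltrametricDist.norm_natCast_le_one K N
    _ = ‖b‖ := by ring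

lemma norm_changeOriginCoeff_le {a : ℕ → K} {C : ℝ} (ha : ∀ n, ‖a n‖ ≤ C) {x : K}
    (hx : ‖x‖ ≤ 1) (m : ℕ) : ‖changeOriginCoeff a x m‖ ≤ C :=
  IsUltrametricDist.norm_tsum_le_of_forall_le fun k =>
    (norm_natCast_mul_mul_pow_le _ _ hx k).trans (ha _)

variable [CompleteSpace K]

theorem hasSum_changeOriginCoeff_mul_pow {a : ℕ → K} (ha : Tendsto a atTop (𝓝 0)) {x y : K}
    (hx : ‖x‖ ≤ 1) (hy : ‖y‖ ≤ 1) :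
    HasSum (fun m => changeOriginCoeff a x m * y ^ m) (∑' n, a n * (x + y) ^ n) := by
  set F : ℕ × ℕ → K := fun q =>
    ((q.1 + q.2).choose q.1 : K) * a (q.1 + q.2) * x ^ q.2 * y ^ q.1 with hF_def
  -- Ultrametricity bounds `‖F (m, k)‖` by `‖a (m + k)‖`, so the double series converges on the
  -- whole closed ball, not only strictly inside the radius of convergence.
  have hF : Summable F := by
    refine NonarchimedeanAddGroup.summable_of_tendsto_cofinite_zero ?_
    refine squeeze_zero_norm (fun q => ?_) ((tendsto_zero_iff_norm_tendsto_zero.mp ha).comp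
      tendsto_fst_add_snd_cofinite_atTop)
    rw [hF_def, norm_mul, norm_pow]
    exact mul_le_of_le_one_right (norm_nonneg _) (pow_le_one₀ (norm_nonneg _) hy) |>.trans
      (norm_natCast_mul_mul_pow_le _ _ hx _)
  have h_diag : HasSum (fun n => a n * (x + y) ^ n) (∑' q, F q) := by
    refine (HasAntidiagonal.sigmaAntidiagonalEquivProd.hasSum_iff.mpr hF.hasSum).sigma
      fun n => ?_
    convert hasSum_fintype _
    change _ = ∑ q : antidiagonal n, F q
    rw [Finset.sum_coe_sort (antidiagonal n) F, add_comm, (Commute.all _ _).add_pow',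
      Finset.mul_sum]
    refine Finset.sum_congr rfl fun q hq => ?_
    simp only [hF_def, mem_antidiagonal.mp hq, nsmul_eq_mul]
    ring
  rw [h_diag.tsum_eq]
  refine hF.hasSum.prod_fiberwise fun m => ?_
  rw [changeOriginCoeff, ← tsum_mul_right]
  exact (hF.prod_factor m).hasSum

end ChangeOrigin

section IdentityTheorem

variable {K : Type*} [NontriviallyNormedField K] [CompleteSpace K]

theorem eq_zero_of_frequently_tsum_mul_pow_eq_zero {b : ℕ → K} {C : ℝ} (hb : ∀ m, ‖b m‖ ≤ C)
    (h : ∃ᶠ x in 𝓝[≠] (0 : K), ∑' m, b m * x ^ m = 0) : b = 0 := by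
  set P := FormalMultilinearSeries.ofScalars K b
  have hP : 1 ≤ P.radius := by
    simpa using P.le_radius_of_bound C (r := 1) fun n => by
      simpa [P, FormalMultilinearSeries.ofScalars_norm] using hb n
  have hP_sum := P.hasFPowerSeriesOnBall (zero_lt_one.trans_le hP)
  have h_eventually : ∀ᶠ x in 𝓝 0, P.sum x = 0 := by
    refine hP_sum.analyticAt.frequently_zero_iff_eventually_zero.mp (h.mono fun x hx => ?_)
    rw [← hx]
    exact FormalMultilinearSeries.ofScalars_sum_eq b x
  exact (FormalMultilinearSeries.ofScalars_series_eq_zero K).mp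
    (hP_sum.hasFPowerSeriesAt.eq_zero_of_eventually h_eventually)

variable [IsUltrametricDist K]

theorem tsum_mul_pow_eq_zero_of_frequently_eq_zero {a : ℕ → K} (ha : Tendsto a atTop (𝓝 0))
    {x₀ : K} (hx₀ : ‖x₀‖ ≤ 1) (h : ∃ᶠ x in 𝓝[≠] x₀, ∑' k, a k * x ^ k = 0) {x : K}
    (hx : ‖x‖ ≤ 1) : ∑' k, a k * x ^ k = 0 := by
  obtain ⟨C, hC⟩ := ha.norm.bddAbove_range
  have h_shift : ∀ x, ‖x‖ ≤ 1 →
      ∑' k, a k * x ^ k = ∑' m, changeOriginCoeff a x₀ m * (x - x₀) ^ m := by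
    intro x hx
    have hx_sub : ‖x - x₀‖ ≤ 1 := by
      rw [sub_eq_add_neg]
      exact (IsUltrametricDist.norm_add_le_max _ _).trans (max_le hx (by rwa [norm_neg]))
    simpa using (hasSum_changeOriginCoeff_mul_pow ha hx₀ hx_sub).tsum_eq.symm
  have h_ball : ∀ᶠ x in 𝓝[≠] x₀, ‖x‖ ≤ 1 := by
    filter_upwards [nhdsWithin_le_nhds ((IsUltrametricDist.isOpen_closedBall (0 : K)
      one_ne_zero).mem_nhds (mem_closedBall_zero_iff.mpr hx₀))] with x hx
    exact mem_closedBall_zero_iff.mp hx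
  have h_tendsto : Tendsto (fun x => x - x₀) (𝓝[≠] x₀) (𝓝[≠] 0) := by
    have := ((continuous_sub_right x₀).continuousWithinAt (x := x₀)).tendsto_nhdsWithin
      (t := {0}ᶜ) fun x hx => sub_ne_zero.mpr hx
    rwa [sub_self] at this
  have h_zero : changeOriginCoeff a x₀ = 0 := by
    refine eq_zero_of_frequently_tsum_mul_pow_eq_zero
      (norm_changeOriginCoeff_le (fun n => hC ⟨n, rfl⟩) hx₀) (h_tendsto.frequently ?_)
    refine (h.and_eventually h_ball).mono fun x ⟨hx_zero, hx_ball⟩ => ?_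
    rwa [← h_shift x hx_ball]
  simp [h_shift x hx, h_zero]

end IdentityTheorem

/-- A `p`-adic analytic function on `ℤ_p` (given by a power series convergent on all of
`ℤ_p`) taking one of its values infinitely many times is constant. -/
theorem padic_analytic_constant_of_infinite_fiber (p : ℕ) [Fact p.Prime]
    (a : ℕ → ℚ_[p]) (g : ℤ_[p] → ℚ_[p])
    (hg : ∀ z : ℤ_[p], HasSum (fun k : ℕ => a k * (z : ℚ_[p]) ^ k) (g z))
    (c : ℚ_[p]) (hinf : {z : ℤ_[p] | g z = c}.Infinite) :
    ∀ z w : ℤ_[p], g z = g w := by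
  set a' := Function.update a 0 (a 0 - c)
  have hg' (z : ℤ_[p]) : HasSum (fun k => a' k * (z : ℚ_[p]) ^ k) (g z - c) :=
    (hg z).update_zero_sub_mul_pow c
  have ha' : Tendsto a' atTop (𝓝 0) := by simpa using (hg' 1).summable.tendsto_atTop_zero
  obtain ⟨z₀, hz₀⟩ := hinf.exists_accPt_principal
  have h_coe : Tendsto ((↑) : ℤ_[p] → ℚ_[p]) (𝓝[≠] z₀) (𝓝[≠] ↑z₀) :=
    continuous_subtype_val.continuousWithinAt.tendsto_nhdsWithin
      fun z hz => Subtype.coe_injective.ne hz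
  have h_freq : ∃ᶠ x in 𝓝[≠] (z₀ : ℚ_[p]), ∑' k, a' k * x ^ k = 0 :=
    h_coe.frequently <| (accPt_iff_frequently_nhdsNE.mp hz₀).mono fun z hz => by
      rw [(hg' z).tsum_eq, show g z = c from hz, sub_self]
  have h_const (z : ℤ_[p]) : g z = c := by
    rw [← sub_eq_zero, ← (hg' z).tsum_eq]
    exact tsum_mul_pow_eq_zero_of_frequently_eq_zero ha' z₀.norm_le_one h_freq z.norm_le_one
  intro z w
  rw [h_const z, h_const w]
end

section
/- For a Mahler series ∑_{k≥1} b_k C(z,k) with b_k in a finite extension of Q_p, if |p^{k(p^l-1)/((p-1)p^l)} b_k / k!|_p → 0 as k → ∞, then the series defines an analytic function on p^l Z_p. -/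
open Filter

/-- The binomial coefficient function `binom(z,k) = z(z-1)⋯(z-k+1)/k!` of `z ∈ ℤ_p`,
with values in a finite extension `K` of `ℚ_p`. -/
noncomputable def padicBinomial (p : ℕ) [Fact p.Prime] (K : Type*)
    [NontriviallyNormedField K] [NormedAlgebra ℚ_[p] K] (z : ℤ_[p]) (k : ℕ) : K :=
  (∏ i ∈ Finset.range k, (algebraMap ℚ_[p] K (z : ℚ_[p]) - (i : K))) / (Nat.factorial k : K)

/-!
Write `b_k binom(p^l z, k) = (b_k / k!) ∏_{i<k} (p^l z - i)`. The linear factor `p^l X - i` has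
coefficients of absolute value at most `p^{-min(l, v_p(i))}`, so by the ultrametric inequality the
coefficients of the product are at most `p^{-S_k}` with `S_k = ∑_{i<k} min(l, v_p(i))`. Counting
the multiples of `p^j` below `k` for `j = 1, …, l` gives
`S_k ≥ k ∑_{j=1}^{l} p^{-j} = k(p^l-1)/((p-1)p^l)`. Hence all coefficients of the `k`-th term are
bounded by a sequence tending to `0`, so the double series over (term, monomial) converges in the
complete nonarchimedean field `K`, where it may be summed in either order.
-/

open Topology Polynomial Finset

theorem tendsto_cofinite_zero_of_norm_le_of_finite_support {E : Type*} [SeminormedAddCommGroup E]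
    (f : ℕ × ℕ → E) {u : ℕ → ℝ} (hu : Tendsto u atTop (𝓝 0)) (hf : ∀ q, ‖f q‖ ≤ u q.1)
    (hrow : ∀ k, (Function.support fun m => f (k, m)).Finite) : Tendsto f cofinite (𝓝 0) := by
  refine tendsto_zero_iff_norm_tendsto_zero.mpr (Metric.tendsto_nhds.mpr fun ε hε => ?_)
  obtain ⟨N, hN⟩ := eventually_atTop.mp (hu.eventually (gt_mem_nhds hε))
  refine eventually_cofinite.mpr (((Set.finite_Iio N).biUnion fun k _ =>
    (Set.finite_singleton k).prod (hrow k)).subset ?_)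
  rintro ⟨k, m⟩ hkm
  simp only [Set.mem_ofPred_eq, Real.dist_eq, sub_zero, abs_norm, not_lt] at hkm
  have hk : k < N := not_le.mp fun hk => (hkm.trans (hf _)).not_gt (hN k hk)
  have hne : f (k, m) ≠ 0 := ne_of_apply_ne norm (norm_zero (E := E) ▸ (hε.trans_le hkm).ne')
  exact Set.mem_biUnion hk ⟨rfl, hne⟩

namespace Polynomial

variable {K : Type*} [NormedField K]

theorem norm_coeff_C_mul_X_sub_C_le (a b : K) (n : ℕ) :
    ‖(C a * X - C b).coeff n‖ ≤ max ‖a‖ ‖b‖ := by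
  rw [coeff_sub, coeff_C_mul, coeff_X, coeff_C]
  rcases n with _ | _ | n <;> simp

variable [IsUltrametricDist K]

theorem norm_coeff_mul_le {P Q : K[X]} {a b : ℝ} (hP : ∀ n, ‖P.coeff n‖ ≤ a)
    (hQ : ∀ n, ‖Q.coeff n‖ ≤ b) (n : ℕ) : ‖(P * Q).coeff n‖ ≤ a * b := by
  have ha : 0 ≤ a := (norm_nonneg _).trans (hP 0)
  have hb : 0 ≤ b := (norm_nonneg _).trans (hQ 0)
  rw [coeff_mul]
  refine IsUltrametricDist.norm_sum_le_of_forall_le_of_nonneg (mul_nonneg ha hb) fun x _ => ?_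
  rw [norm_mul]
  exact mul_le_mul (hP _) (hQ _) (norm_nonneg _) ha

theorem norm_coeff_prod_le {ι : Type*} (s : Finset ι) (P : ι → K[X]) (r : ι → ℝ)
    (hP : ∀ i ∈ s, ∀ n, ‖(P i).coeff n‖ ≤ r i) (n : ℕ) :
    ‖(∏ i ∈ s, P i).coeff n‖ ≤ ∏ i ∈ s, r i := by
  classical
  induction s using Finset.induction_on generalizing n with
  | empty =>
    rw [prod_empty, prod_empty, coeff_one]
    split_ifs <;> simp
  | insert i s hi ih =>
    rw [prod_insert hi, prod_insert hi]
    exact norm_coeff_mul_le (hP i (mem_insert_self i s))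
      (ih fun j hj => hP j (mem_insert_of_mem hj)) n

variable [CompleteSpace K]

theorem hasSum_eval_and_hasSum_tsum_coeff_mul_pow (P : ℕ → K[X]) {u : ℕ → ℝ}
    (hu : Tendsto u atTop (𝓝 0)) (hP : ∀ k m, ‖(P k).coeff m‖ ≤ u k) {t : K} (ht : ‖t‖ ≤ 1) :
    ∃ s, HasSum (fun k => (P k).eval t) s ∧
      HasSum (fun m => (∑' k, (P k).coeff m) * t ^ m) s := by
  let F : ℕ × ℕ → K := fun q => (P q.1).coeff q.2 * t ^ q.2
  have hF : ∀ q, ‖F q‖ ≤ u q.1 := fun q => by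
    rw [norm_mul, norm_pow]
    exact (mul_le_of_le_one_right (norm_nonneg _) (pow_le_one₀ (norm_nonneg t) ht)).trans (hP _ _)
  have hrow : ∀ k, HasSum (fun m => F (k, m)) ((P k).eval t) := fun k => by
    rw [eval_eq_sum, sum_def]
    exact hasSum_sum_of_ne_finset_zero fun m hm => by simp [F, notMem_support_iff.mp hm]
  have hcol : ∀ m, HasSum (fun k => F (k, m)) ((∑' k, (P k).coeff m) * t ^ m) := fun m => by
    have hm : Tendsto (fun k => (P k).coeff m) cofinite (𝓝 0) := by
      rw [Nat.cofinite_eq_atTop]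
      exact squeeze_zero_norm (fun k => hP k m) hu
    exact (NonarchimedeanAddGroup.summable_of_tendsto_cofinite_zero hm).hasSum.mul_right _
  have hF0 : Tendsto F cofinite (𝓝 0) := by
    refine tendsto_cofinite_zero_of_norm_le_of_finite_support F hu hF fun k => ?_
    refine (P k).support.finite_toSet.subset fun m hm => ?_
    exact mem_support_iff.mpr (left_ne_zero_of_mul hm)
  have hsum := (NonarchimedeanAddGroup.summable_of_tendsto_cofinite_zero hF0).hasSum
  exact ⟨_, hsum.prod_fiberwise hrow,
    ((Equiv.prodComm ℕ ℕ).hasSum_iff.mpr hsum).prod_fiberwise hcol⟩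

end Polynomial

-- `min l (v_p i)` with the convention `v_p 0 = ∞`; note that Mathlib's `padicValNat p 0` is `0`.
def truncPadicValNat (p l i : ℕ) : ℕ := if i = 0 then l else min l (padicValNat p i)

theorem truncPadicValNat_le (p l i : ℕ) : truncPadicValNat p l i ≤ l := by
  unfold truncPadicValNat
  split_ifs
  exacts [le_rfl, min_le_left _ _]

theorem pow_truncPadicValNat_dvd (p l i : ℕ) : p ^ truncPadicValNat p l i ∣ i := by
  unfold truncPadicValNat
  split_ifs with hi
  · exact hi ▸ dvd_zero _
  · exact (pow_dvd_pow p (min_le_right _ _)).trans pow_padicValNat_dvd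

theorem truncPadicValNat_eq_card (p : ℕ) [Fact p.Prime] (l i : ℕ) :
    truncPadicValNat p l i = #{j ∈ Icc 1 l | p ^ j ∣ i} := by
  rcases eq_or_ne i 0 with rfl | hi
  · simp [truncPadicValNat]
  · have h : {j ∈ Icc 1 l | p ^ j ∣ i} = Icc 1 (min l (padicValNat p i)) := by
      ext j
      simp only [mem_filter, mem_Icc, padicValNat_dvd_iff_le hi, le_min_iff]
      tauto
    rw [h, Nat.card_Icc, truncPadicValNat, if_neg hi, Nat.add_sub_cancel]

theorem le_card_filter_dvd_mul {d : ℕ} (hd : 0 < d) (k : ℕ) :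
    k ≤ #{i ∈ range k | d ∣ i} * d := by
  induction k with
  | zero => simp
  | succ k ih =>
    rw [range_add_one, filter_insert]
    split_ifs with h
    · rw [card_insert_of_notMem (by simp), add_mul, one_mul]
      omega
    · rcases ih.lt_or_eq with h' | h'
      · exact h'
      · exact absurd (h' ▸ dvd_mul_left d _) h

theorem sum_Icc_inv_pow {x : ℝ} (hx0 : x ≠ 0) (hx1 : x ≠ 1) (l : ℕ) :
    ∑ j ∈ Icc 1 l, (x ^ j)⁻¹ = (x ^ l - 1) / ((x - 1) * x ^ l) := by
  have hx1' : x - 1 ≠ 0 := sub_ne_zero.mpr hx1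
  induction l with
  | zero => simp
  | succ l ih =>
    rw [sum_Icc_succ_top (Nat.le_add_left 1 l), ih]
    field_simp
    ring

theorem le_sum_truncPadicValNat (p : ℕ) [hp : Fact p.Prime] (l k : ℕ) :
    (k : ℝ) * ((p : ℝ) ^ l - 1) / (((p : ℝ) - 1) * (p : ℝ) ^ l) ≤
      ∑ i ∈ range k, (truncPadicValNat p l i : ℝ) := by
  have hp1 : (1 : ℝ) < p := by exact_mod_cast hp.out.one_lt
  have hcount : ∑ i ∈ range k, truncPadicValNat p l i =
      ∑ j ∈ Icc 1 l, #{i ∈ range k | p ^ j ∣ i} := by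
    simp_rw [truncPadicValNat_eq_card p, card_filter]
    exact sum_comm
  rw [← Nat.cast_sum, hcount, mul_div_assoc, ← sum_Icc_inv_pow (by positivity) hp1.ne' l,
    mul_sum, Nat.cast_sum]
  refine sum_le_sum fun j _ => ?_
  rw [← div_eq_mul_inv, div_le_iff₀ (by positivity)]
  exact_mod_cast le_card_filter_dvd_mul (pow_pos hp.out.pos j) k

section PadicExtension

variable (p : ℕ) [Fact p.Prime] (K : Type*) [NormedField K] [NormedAlgebra ℚ_[p] K]

theorem norm_natCast_le_of_pow_dvd {n i : ℕ} (h : p ^ n ∣ i) : ‖(i : K)‖ ≤ ((p : ℝ) ^ n)⁻¹ := by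
  rw [← map_natCast (algebraMap ℚ_[p] K), norm_algebraMap', ← Int.cast_natCast,
    ← zpow_natCast, ← zpow_neg, Padic.norm_int_le_pow_iff_dvd]
  exact_mod_cast h

theorem norm_algebraMap_padicInt_le_one (z : ℤ_[p]) : ‖algebraMap ℚ_[p] K z‖ ≤ 1 := by
  rw [norm_algebraMap', PadicInt.padic_norm_e_of_padicInt]
  exact PadicInt.norm_le_one z

theorem norm_coeff_prod_pow_mul_X_sub_le [IsUltrametricDist K] (l k m : ℕ) :
    ‖(∏ i ∈ range k, (C ((p : K) ^ l) * X - C (i : K))).coeff m‖ ≤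
      ((p : ℝ) ^ ∑ i ∈ range k, truncPadicValNat p l i)⁻¹ := by
  rw [← prod_pow_eq_pow_sum, ← prod_inv_distrib]
  refine norm_coeff_prod_le _ _ _ (fun i _ n => ?_) m
  refine (norm_coeff_C_mul_X_sub_C_le _ _ n).trans (max_le ?_ ?_)
  · rw [← Nat.cast_pow]
    exact norm_natCast_le_of_pow_dvd p K (pow_dvd_pow p (truncPadicValNat_le p l i))
  · exact norm_natCast_le_of_pow_dvd p K (pow_truncPadicValNat_dvd p l i)

end PadicExtension

theorem padicBinomial_pow_mul (p : ℕ) [Fact p.Prime] (K : Type*) [NontriviallyNormedField K]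
    [NormedAlgebra ℚ_[p] K] (l : ℕ) (z : ℤ_[p]) (k : ℕ) :
    padicBinomial p K ((p : ℤ_[p]) ^ l * z) k =
      (∏ i ∈ range k, (C ((p : K) ^ l) * X - C (i : K))).eval (algebraMap ℚ_[p] K z) /
        (k.factorial : K) := by
  simp [padicBinomial, eval_prod]

theorem tendsto_norm_div_factorial_mul_inv_pow_sum_truncPadicValNat (p : ℕ) [hp : Fact p.Prime]
    {K : Type*} [NormedField K] (l : ℕ) (b : ℕ → K)
    (hb : Tendsto (fun k : ℕ =>
        (p : ℝ) ^ (-((k : ℝ) * ((p : ℝ) ^ l - 1) / (((p : ℝ) - 1) * (p : ℝ) ^ l))) *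
          ‖b k / (Nat.factorial k : K)‖) atTop (𝓝 0)) :
    Tendsto (fun k => ‖b k / (k.factorial : K)‖ *
      ((p : ℝ) ^ ∑ i ∈ range k, truncPadicValNat p l i)⁻¹) atTop (𝓝 0) := by
  have hp1 : (1 : ℝ) < p := by exact_mod_cast hp.out.one_lt
  refine squeeze_zero (fun k => by positivity) (fun k => ?_) hb
  rw [mul_comm, ← Real.rpow_natCast, ← Real.rpow_neg (by positivity)]
  gcongr
  · exact hp1.le
  · exact_mod_cast le_sum_truncPadicValNat p l k

theorem mahler_series_analytic_on_ball_general (p : ℕ) [Fact p.Prime] (K : Type*)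
    [NontriviallyNormedField K] [NormedAlgebra ℚ_[p] K] [FiniteDimensional ℚ_[p] K]
    [IsUltrametricDist K] (l : ℕ) (b : ℕ → K)
    (hb : Tendsto (fun k : ℕ =>
        (p : ℝ) ^ (-((k : ℝ) * ((p : ℝ) ^ l - 1) / (((p : ℝ) - 1) * (p : ℝ) ^ l))) *
          ‖b k / (Nat.factorial k : K)‖) atTop (nhds 0)) :
    ∃ g : ℤ_[p] → K,
      (∀ z : ℤ_[p],
        HasSum (fun k : ℕ => b (k + 1) * padicBinomial p K ((p : ℤ_[p]) ^ l * z) (k + 1))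
          (g z)) ∧
      ∃ a : ℕ → K, ∀ z : ℤ_[p],
        HasSum (fun m : ℕ => a m * (algebraMap ℚ_[p] K (z : ℚ_[p])) ^ m) (g z) := by
  have : CompleteSpace K := FiniteDimensional.complete ℚ_[p] K
  let P : ℕ → K[X] := fun k => C (b (k + 1) / ((k + 1).factorial : K)) *
    ∏ i ∈ range (k + 1), (C ((p : K) ^ l) * X - C (i : K))
  have hP : ∀ k m, ‖(P k).coeff m‖ ≤ ‖b (k + 1) / ((k + 1).factorial : K)‖ *
      ((p : ℝ) ^ ∑ i ∈ range (k + 1), truncPadicValNat p l i)⁻¹ := fun k m => by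
    rw [coeff_C_mul, norm_mul]
    exact mul_le_mul_of_nonneg_left (norm_coeff_prod_pow_mul_X_sub_le p K l _ m) (norm_nonneg _)
  have hu := (tendsto_norm_div_factorial_mul_inv_pow_sum_truncPadicValNat p l b hb).comp
    (tendsto_add_atTop_nat 1)
  choose g hg using fun z : ℤ_[p] =>
    hasSum_eval_and_hasSum_tsum_coeff_mul_pow P hu hP (norm_algebraMap_padicInt_le_one p K z)
  refine ⟨g, fun z => ?_, fun m => ∑' k, (P k).coeff m, fun z => (hg z).2⟩
  convert (hg z).1 using 2 with k
  simp only [P, padicBinomial_pow_mul p K, eval_mul, eval_C]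
  ring

/-- For a Mahler series `∑_{k ≥ 1} b_k · binom(z,k)` with coefficients in a finite
extension `K` of `ℚ_p`, if `|p^{k(p^l-1)/((p-1)p^l)} · b_k / k!| → 0` as `k → ∞`,
then the series defines an analytic function on `p^l ℤ_p`: the function
`z ↦ g(p^l z)` is given by a power series convergent on `ℤ_p`. -/
theorem mahler_series_analytic_on_ball (p : ℕ) [Fact p.Prime] (K : Type*)
    [NontriviallyNormedField K] [NormedAlgebra ℚ_[p] K] [FiniteDimensional ℚ_[p] K]
    [IsUltrametricDist K] (l : ℕ) (hl : 1 ≤ l) (b : ℕ → K)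
    (hb : Tendsto (fun k : ℕ =>
        (p : ℝ) ^ (-((k : ℝ) * ((p : ℝ) ^ l - 1) / (((p : ℝ) - 1) * (p : ℝ) ^ l))) *
          ‖b k / (Nat.factorial k : K)‖) atTop (nhds 0)) :
    ∃ g : ℤ_[p] → K,
      (∀ z : ℤ_[p],
        HasSum (fun k : ℕ => b (k + 1) * padicBinomial p K ((p : ℤ_[p]) ^ l * z) (k + 1))
          (g z)) ∧
      ∃ a : ℕ → K, ∀ z : ℤ_[p],
        HasSum (fun m : ℕ => a m * (algebraMap ℚ_[p] K (z : ℚ_[p])) ^ m) (g z) :=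
  mahler_series_analytic_on_ball_general p K l b hb
end

section
/- If φ : O^n → O^n is given by power series φ_i with integral coefficients satisfying φ_i(x) ≡ x_i mod 𝔪 and the coefficient of x^α in φ_i divisible by r^{|α|−1} for |α| > 1 (r a uniformizer), then for any ω ∈ O^n there exist functions g_1,...,g_n : Z_p → O, continuous on Z_p, with g(0) = ω and g(z+1) = φ(g(z)) for all z ∈ Z_p. -/
/-! On the closed unit polydisc `B`, `φ - id` is `ρ`-Lipschitz for some `ρ < 1`: the linear
coefficients of `φ_i - x_i` are small because `φ ≡ id` mod `𝔪`, the higher ones because they are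
divisible by `r`. Writing `φ^[N] x - x` as the sum of the increments `φ (φ^[t] x) - φ^[t] x`,
each within `ρ · sup_B ‖φ y - y‖` of `φ x - x`, bounds it by `max ρ ‖N‖ · sup_B ‖φ y - y‖`;
taking `N = p` repeatedly, `φ^[p^s]` is `κ^s`-close to the identity on `B`, where
`κ = max ρ p⁻¹ < 1`. Hence `m ↦ φ^[m] ω` is uniformly continuous for the `p`-adic metric on `ℕ`
and extends continuously to `ℤ_p`, and the functional equation passes to the closure of `ℕ`. -/

open Filter Function Metric Set Topology
open scoped NNReal

namespace Finsupp

lemma eq_zero_or_eq_single_one_or_one_lt_degree {σ : Type*} (d : σ →₀ ℕ) :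
    d = 0 ∨ (∃ j, d = single j 1) ∨ 1 < d.degree := by
  rcases Nat.lt_or_ge 1 d.degree with h | h
  · exact .inr (.inr h)
  · rcases Nat.le_one_iff_eq_zero_or_eq_one.1 h with h | h
    · exact .inl ((degree_eq_zero_iff d).1 h)
    · exact .inr (.inl ((sum_eq_one_iff d).1 h))

lemma prod_univ_pow_single_one {ι M : Type*} [Fintype ι] [CommMonoid M] (x : ι → M) (j : ι) :
    ∏ k, x k ^ single j 1 k = x j := by
  rw [← prod_fintype _ (fun k n => x k ^ n) fun _ => pow_zero _,
    prod_single_index (h := fun k n => x k ^ n) (pow_zero _), pow_one]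

end Finsupp

lemma norm_pow_le_one_of_norm_le_one {R : Type*} [SeminormedRing R] [NormOneClass R] {a : R}
    (ha : ‖a‖ ≤ 1) (m : ℕ) : ‖a ^ m‖ ≤ 1 :=
  (norm_pow_le a m).trans (pow_le_one₀ (norm_nonneg a) ha)

namespace IsUltrametricDist

lemma norm_sub_le_of_hasSum {E β : Type*} [NormedAddCommGroup E] [IsUltrametricDist E]
    {f : β → E} {s : E} (hf : HasSum f s) (b : β) {C : ℝ} (hC : 0 ≤ C)
    (h : ∀ b' ≠ b, ‖f b'‖ ≤ C) : ‖s - f b‖ ≤ C := by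
  classical
  have := hf.update b 0
  rw [zero_sub, neg_add_eq_sub] at this
  rw [← this.tsum_eq]
  refine norm_tsum_le_of_forall_le_of_nonneg hC fun b' => ?_
  rcases eq_or_ne b' b with rfl | hb'
  · simpa using hC
  · simpa [update_of_ne hb'] using h b' hb'

lemma mapsTo_closedBall_of_norm_sub_le {E : Type*} [SeminormedAddCommGroup E] [IsUltrametricDist E]
    {f : E → E} {R : ℝ} (h : ∀ x ∈ closedBall 0 R, ‖f x - x‖ ≤ R) :
    MapsTo f (closedBall 0 R) (closedBall 0 R) := fun x hx => by
  have := (norm_add_le_max (f x - x) x).trans (max_le (h x hx) (mem_closedBall_zero_iff.1 hx))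
  rwa [sub_add_cancel, ← mem_closedBall_zero_iff] at this

lemma norm_sub_le_max {E : Type*} [SeminormedAddCommGroup E] [IsUltrametricDist E] (x y : E) :
    ‖x - y‖ ≤ max ‖x‖ ‖y‖ := by
  simpa [sub_eq_add_neg] using norm_add_le_max x (-y)

variable {R ι : Type*} [NormedCommRing R] [NormOneClass R] [IsUltrametricDist R]

lemma norm_pow_sub_pow_le {a b : R} (ha : ‖a‖ ≤ 1) (hb : ‖b‖ ≤ 1) (m : ℕ) :
    ‖a ^ m - b ^ m‖ ≤ ‖a - b‖ := by
  rw [← geom_sum₂_mul]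
  refine (norm_mul_le _ _).trans (mul_le_of_le_one_left (norm_nonneg _) ?_)
  refine norm_sum_le_of_forall_le_of_nonneg zero_le_one fun i _ => ?_
  exact (norm_mul_le _ _).trans <|
    mul_le_one₀ (norm_pow_le_one_of_norm_le_one ha i) (norm_nonneg _)
      (norm_pow_le_one_of_norm_le_one hb _)

lemma norm_prod_sub_prod_le (s : Finset ι) {f g : ι → R} {ε : ℝ} (hε : 0 ≤ ε)
    (hf : ∀ i ∈ s, ‖f i‖ ≤ 1) (hg : ∀ i ∈ s, ‖g i‖ ≤ 1) (hfg : ∀ i ∈ s, ‖f i - g i‖ ≤ ε) :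
    ‖∏ i ∈ s, f i - ∏ i ∈ s, g i‖ ≤ ε := by
  induction s using Finset.cons_induction with
  | empty => simpa using hε
  | cons c s hc ih =>
    simp only [Finset.forall_mem_cons] at hf hg hfg
    rw [Finset.prod_cons, Finset.prod_cons,
      show f c * ∏ i ∈ s, f i - g c * ∏ i ∈ s, g i
        = (f c - g c) * ∏ i ∈ s, f i + g c * (∏ i ∈ s, f i - ∏ i ∈ s, g i) by ring]
    have hprod : ‖∏ i ∈ s, f i‖ ≤ 1 :=
      (Finset.norm_prod_le _ _).trans (Finset.prod_le_one (fun _ _ => norm_nonneg _) hf.2)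
    refine (norm_add_le_max _ _).trans (max_le ?_ ?_)
    · calc _ ≤ ‖f c - g c‖ * ‖∏ i ∈ s, f i‖ := norm_mul_le _ _
        _ ≤ ε * 1 := mul_le_mul hfg.1 hprod (norm_nonneg _) hε
        _ = ε := mul_one ε
    · calc _ ≤ ‖g c‖ * ‖∏ i ∈ s, f i - ∏ i ∈ s, g i‖ := norm_mul_le _ _
        _ ≤ 1 * ε := mul_le_mul hg.1 (ih hf.2 hg.2 hfg.2) (norm_nonneg _) zero_le_one
        _ = ε := one_mul ε

lemma norm_monomial_sub_monomial_le [Fintype ι] {x y : ι → R} (hx : ‖x‖ ≤ 1) (hy : ‖y‖ ≤ 1)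
    (d : ι →₀ ℕ) : ‖∏ j, x j ^ d j - ∏ j, y j ^ d j‖ ≤ ‖x - y‖ :=
  norm_prod_sub_prod_le _ (norm_nonneg _)
    (fun j _ => norm_pow_le_one_of_norm_le_one ((norm_le_pi_norm x j).trans hx) _)
    (fun j _ => norm_pow_le_one_of_norm_le_one ((norm_le_pi_norm y j).trans hy) _)
    (fun j _ => (norm_pow_sub_pow_le ((norm_le_pi_norm x j).trans hx)
      ((norm_le_pi_norm y j).trans hy) _).trans (norm_le_pi_norm (x - y) j))

end IsUltrametricDist

section PowerSeries

open Finsupp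

variable {R ι : Type*} [NormedCommRing R] [NormOneClass R] [IsUltrametricDist R] [Fintype ι]
  {c : (ι →₀ ℕ) → R} {ψ : (ι → R) → R}

lemma lipschitzOnWith_closedBall_of_hasSum
    (hψ : ∀ x : ι → R, ‖x‖ ≤ 1 → HasSum (fun d => c d * ∏ j, x j ^ d j) (ψ x))
    {ρ : ℝ≥0} (hc : ∀ d ≠ 0, ‖c d‖ ≤ ρ) : LipschitzOnWith ρ ψ (closedBall 0 1) := by
  refine lipschitzOnWith_iff_norm_sub_le.2 fun x hx y hy => ?_
  rw [mem_closedBall_zero_iff] at hx hy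
  rw [← ((hψ x hx).sub (hψ y hy)).tsum_eq]
  refine IsUltrametricDist.norm_tsum_le_of_forall_le_of_nonneg (by positivity) fun d => ?_
  rcases eq_or_ne d 0 with rfl | hd
  · simpa using mul_nonneg ρ.2 (norm_nonneg (x - y))
  · rw [← mul_sub]
    exact (norm_mul_le _ _).trans <| mul_le_mul (hc d hd)
      (IsUltrametricDist.norm_monomial_sub_monomial_le hx hy d) (norm_nonneg _) ρ.2

lemma norm_coeff_single_one_le [DecidableEq ι]
    (hψ : ∀ x : ι → R, ‖x‖ ≤ 1 → HasSum (fun d => c d * ∏ j, x j ^ d j) (ψ x))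
    {C : ℝ} (hC : 0 ≤ C) (hc : ∀ d, 1 < d.degree → ‖c d‖ ≤ C) (j : ι) :
    ‖c (single j 1)‖ ≤ max C (max ‖ψ (Pi.single j 1)‖ ‖ψ 0‖) := by
  have hterm : ∀ d ≠ single j 1,
      ‖c d * ∏ k, Pi.single j (1 : R) k ^ d k - c d * ∏ k, (0 : ι → R) k ^ d k‖ ≤ C := by
    intro d hd
    rcases d.eq_zero_or_eq_single_one_or_one_lt_degree with rfl | ⟨k, rfl⟩ | hdeg
    · simpa using hC
    · have hkj : k ≠ j := by rintro rfl; exact hd rfl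
      simpa [prod_univ_pow_single_one, hkj] using hC
    · rw [← mul_sub]
      calc _ ≤ C * ‖Pi.single j (1 : R) - 0‖ := (norm_mul_le _ _).trans <| mul_le_mul
              (hc d hdeg) (IsUltrametricDist.norm_monomial_sub_monomial_le
                (by simp [Pi.norm_single]) (by simp) d) (norm_nonneg _) hC
        _ = C := by simp [Pi.norm_single]
  have hhigher := IsUltrametricDist.norm_sub_le_of_hasSum
    ((hψ _ (by simp [Pi.norm_single])).sub (hψ 0 (by simp))) (single j 1) hC hterm
  simp only [prod_univ_pow_single_one, Pi.single_eq_same, Pi.zero_apply, mul_one, mul_zero,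
    sub_zero] at hhigher
  calc ‖c (single j 1)‖
      = ‖(ψ (Pi.single j 1) - ψ 0) - (ψ (Pi.single j 1) - ψ 0 - c (single j 1))‖ := by
        rw [sub_sub_cancel]
    _ ≤ max ‖ψ (Pi.single j 1) - ψ 0‖ C :=
        (IsUltrametricDist.norm_sub_le_max _ _).trans (max_le_max le_rfl hhigher)
    _ ≤ max C (max ‖ψ (Pi.single j 1)‖ ‖ψ 0‖) := by
        rw [max_comm]
        exact max_le_max le_rfl (IsUltrametricDist.norm_sub_le_max _ _)

theorem exists_lt_one_lipschitzOnWith_sub_of_hasSum [DecidableEq ι] {a : ι → (ι →₀ ℕ) → R}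
    {φ : (ι → R) → ι → R} {r : R} (hr : ‖r‖ < 1)
    (hφ : ∀ x : ι → R, ‖x‖ ≤ 1 → ∀ i, HasSum (fun d => a i d * ∏ j, x j ^ d j) (φ x i))
    (hφx : ∀ x : ι → R, ‖x‖ ≤ 1 → ∀ i, ‖φ x i - x i‖ < 1)
    (ha : ∀ i d, 1 < d.degree → ‖a i d‖ ≤ ‖r‖) :
    ∃ ρ : ℝ≥0, ρ < 1 ∧ LipschitzOnWith ρ (fun x => φ x - x) (closedBall 0 1) := by
  set c : ι → (ι →₀ ℕ) → R := fun i d => a i d - if d = single i 1 then 1 else 0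
  have hc : ∀ i x, ‖x‖ ≤ 1 → HasSum (fun d => c i d * ∏ j, x j ^ d j) (φ x i - x i) := by
    intro i x hx
    have hterm : (fun d => c i d * ∏ j, x j ^ d j)
        = fun d => a i d * ∏ j, x j ^ d j - if d = single i 1 then x i else 0 := by
      funext d
      split_ifs with h <;> simp [c, h, sub_mul, prod_univ_pow_single_one]
    exact hterm ▸ (hφ x hx i).sub (hasSum_ite_eq (single i 1) (x i))
  have hc_deg : ∀ i d, 1 < d.degree → ‖c i d‖ ≤ ‖r‖ := by
    intro i d hd
    have : d ≠ single i 1 := by rintro rfl; simp at hd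
    simpa [c, this] using ha i d hd
  have hc_single : ∀ i j, ‖c i (single j 1)‖₊ < 1 := by
    intro i j
    refine (norm_coeff_single_one_le (hc i) (norm_nonneg r) (hc_deg i) j).trans_lt ?_
    exact max_lt hr (max_lt (hφx _ (by simp [Pi.norm_single]) i) (hφx 0 (by simp) i))
  refine ⟨max ‖r‖₊ (Finset.univ.sup fun q : ι × ι => ‖c q.1 (single q.2 1)‖₊),
    max_lt hr ((Finset.sup_lt_iff zero_lt_one).2 fun q _ => hc_single q.1 q.2), ?_⟩
  refine lipschitzOnWith_iff_norm_sub_le.2 fun x hx y hy =>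
    (pi_norm_le_iff_of_nonneg (by positivity)).2 fun i => ?_
  refine lipschitzOnWith_iff_norm_sub_le.1
    (lipschitzOnWith_closedBall_of_hasSum (hc i) fun d hd => ?_) hx hy
  rcases d.eq_zero_or_eq_single_one_or_one_lt_degree with rfl | ⟨j, rfl⟩ | hdeg
  · exact absurd rfl hd
  · exact le_max_of_le_right (Finset.le_sup (f := fun q : ι × ι => ‖c q.1 (single q.2 1)‖₊)
      (Finset.mem_univ (i, j)))
  · exact (hc_deg i d hdeg).trans (le_max_left _ _)

end PowerSeries

section NearIdentity

variable {E : Type*} [NormedAddCommGroup E] [IsUltrametricDist E] {f : E → E} {S : Set E}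
  {ρ : ℝ≥0}

lemma LipschitzOnWith.of_sub_id (hρ : ρ ≤ 1) (hf : LipschitzOnWith ρ (fun x => f x - x) S) :
    LipschitzOnWith 1 f S := by
  refine lipschitzOnWith_iff_norm_sub_le.2 fun x hx y hy => ?_
  rw [NNReal.coe_one, one_mul,
    show f x - f y = (f x - x - (f y - y)) + (x - y) by abel]
  refine (IsUltrametricDist.norm_add_le_max _ _).trans (max_le ?_ le_rfl)
  exact (lipschitzOnWith_iff_norm_sub_le.1 hf hx hy).trans
    (mul_le_of_le_one_left (norm_nonneg _) hρ)

lemma LipschitzOnWith.iterate_sub_id (hS : MapsTo f S S) (hρ : ρ ≤ 1)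
    (hf : LipschitzOnWith ρ (fun x => f x - x) S) (m : ℕ) :
    LipschitzOnWith ρ (fun x => f^[m] x - x) S := by
  induction m with
  | zero =>
    exact lipschitzOnWith_iff_norm_sub_le.2 fun x _ y _ => by
      simpa using mul_nonneg ρ.2 (norm_nonneg (x - y))
  | succ m ih =>
    have hstep : LipschitzOnWith ρ (fun x => f (f^[m] x) - f^[m] x) S :=
      mul_one ρ ▸ hf.comp (ih.of_sub_id hρ) (hS.iterate m)
    refine lipschitzOnWith_iff_norm_sub_le.2 fun x hx y hy => ?_
    simp only [iterate_succ_apply']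
    rw [show f (f^[m] x) - x - (f (f^[m] y) - y)
      = (f (f^[m] x) - f^[m] x - (f (f^[m] y) - f^[m] y)) + (f^[m] x - x - (f^[m] y - y)) by abel]
    exact (IsUltrametricDist.norm_add_le_max _ _).trans <| max_le
      (lipschitzOnWith_iff_norm_sub_le.1 hstep hx hy) (lipschitzOnWith_iff_norm_sub_le.1 ih hx hy)

lemma norm_iterate_sub_le (hS : MapsTo f S S) {ε : ℝ} (hε : ∀ x ∈ S, ‖f x - x‖ ≤ ε) {x : E}
    (hx : x ∈ S) (m : ℕ) : ‖f^[m] x - x‖ ≤ ε := by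
  induction m with
  | zero => simpa using (norm_nonneg _).trans (hε x hx)
  | succ m ih =>
    rw [iterate_succ_apply', ← sub_add_sub_cancel _ (f^[m] x)]
    exact (IsUltrametricDist.norm_add_le_max _ _).trans (max_le (hε _ (hS.iterate m hx)) ih)

variable {𝕜 : Type*} [NormedField 𝕜] [NormedSpace 𝕜 E]

lemma norm_iterate_sub_le_mul (hS : MapsTo f S S) (hf : LipschitzOnWith ρ (fun x => f x - x) S)
    {ε : ℝ} (hε : ∀ x ∈ S, ‖f x - x‖ ≤ ε) {x : E} (hx : x ∈ S) (N : ℕ) :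
    ‖f^[N] x - x‖ ≤ max ↑ρ ‖(N : 𝕜)‖ * ε := by
  have hε0 : 0 ≤ ε := (norm_nonneg _).trans (hε x hx)
  have hsum : f^[N] x - x = (N : 𝕜) • (f x - x)
      + ∑ t ∈ Finset.range N, (f (f^[t] x) - f^[t] x - (f x - x)) := by
    rw [Finset.sum_sub_distrib, Finset.sum_const, Finset.card_range, Nat.cast_smul_eq_nsmul,
      add_sub_cancel]
    simp only [← iterate_succ_apply' f]
    rw [Finset.sum_range_sub (fun t => f^[t] x), iterate_zero_apply]
  rw [hsum]
  refine (IsUltrametricDist.norm_add_le_max _ _).trans (max_le ?_ ?_)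
  · rw [norm_smul]
    exact mul_le_mul (le_max_right _ _) (hε x hx) (norm_nonneg _) (by positivity)
  · refine IsUltrametricDist.norm_sum_le_of_forall_le_of_nonneg (by positivity) fun t _ => ?_
    calc _ ≤ ρ * ‖f^[t] x - x‖ :=
          lipschitzOnWith_iff_norm_sub_le.1 hf (hS.iterate t hx) hx
      _ ≤ max ↑ρ ‖(N : 𝕜)‖ * ε :=
          mul_le_mul (le_max_left _ _) (norm_iterate_sub_le hS hε hx t) (norm_nonneg _)
            (by positivity)

lemma norm_iterate_pow_sub_le (hS : MapsTo f S S) (hρ : ρ ≤ 1)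
    (hf : LipschitzOnWith ρ (fun x => f x - x) S) {ε : ℝ} (hε : ∀ x ∈ S, ‖f x - x‖ ≤ ε)
    (N s : ℕ) {x : E} (hx : x ∈ S) : ‖f^[N ^ s] x - x‖ ≤ max ↑ρ ‖(N : 𝕜)‖ ^ s * ε := by
  induction s generalizing x with
  | zero => simpa using hε x hx
  | succ s ih =>
    rw [pow_succ, iterate_mul, pow_succ, mul_comm _ (max _ _), mul_assoc]
    exact norm_iterate_sub_le_mul (hS.iterate _) (hf.iterate_sub_id hS hρ _) (fun y hy => ih hy)
      hx N

lemma norm_iterate_add_pow_mul_sub_le (hS : MapsTo f S S) (hρ : ρ ≤ 1)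
    (hf : LipschitzOnWith ρ (fun x => f x - x) S) {ε : ℝ} (hε : ∀ x ∈ S, ‖f x - x‖ ≤ ε)
    (N s m t : ℕ) {x : E} (hx : x ∈ S) :
    ‖f^[m + N ^ s * t] x - f^[m] x‖ ≤ max ↑ρ ‖(N : 𝕜)‖ ^ s * ε := by
  rw [iterate_add_apply]
  calc _ ≤ ‖f^[N ^ s * t] x - x‖ := by
        simpa using lipschitzOnWith_iff_norm_sub_le.1 ((hf.iterate_sub_id hS hρ m).of_sub_id hρ)
          ((hS.iterate _) hx) hx
    _ ≤ _ := by
        rw [iterate_mul]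
        exact norm_iterate_sub_le (hS.iterate _)
          (fun y hy => norm_iterate_pow_sub_le (𝕜 := 𝕜) hS hρ hf hε N s hy) hx t

end NearIdentity

theorem PadicInt.exists_continuous_natCast_eq {p : ℕ} [Fact p.Prime] {X : Type*} [MetricSpace X]
    [CompleteSpace X] (u : ℕ → X)
    (hu : ∀ ε > 0, ∃ s : ℕ, ∀ m t, dist (u (m + p ^ s * t)) (u m) < ε) :
    ∃ g : ℤ_[p] → X, Continuous g ∧ ∀ m : ℕ, g m = u m := by
  let e : ℕ ≃ range ((↑) : ℕ → ℤ_[p]) := Equiv.ofInjective _ Nat.cast_injective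
  have hv : UniformContinuous (u ∘ e.symm) := by
    refine Metric.uniformContinuous_iff.2 fun ε hε => ?_
    obtain ⟨s, hs⟩ := hu ε hε
    refine ⟨p ^ (-(s : ℤ)), by have := (Fact.out : p.Prime).pos; positivity, fun {a b} hab => ?_⟩
    obtain ⟨m, rfl⟩ := e.surjective a
    obtain ⟨m', rfl⟩ := e.surjective b
    have hmod : m ≡ m' [MOD p ^ s] := by
      refine (Nat.modEq_iff_dvd).2 ?_
      rw [Nat.cast_pow, ← PadicInt.norm_int_le_pow_iff_dvd, ← norm_neg]
      simpa [Subtype.dist_eq, dist_eq_norm, e] using hab.le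
    simp only [comp_apply, Equiv.symm_apply_apply]
    wlog hle : m ≤ m' generalizing m m'
    · rw [dist_comm]; exact this m' m (by simpa [dist_comm] using hab) hmod.symm (le_of_not_ge hle)
    obtain ⟨t, ht⟩ := (Nat.modEq_iff_dvd' hle).1 hmod
    rw [show m' = m + p ^ s * t by omega, dist_comm]
    exact hs m t
  have hind : IsUniformInducing ((↑) : range ((↑) : ℕ → ℤ_[p]) → ℤ_[p]) :=
    isUniformEmbedding_subtype_val.isUniformInducing
  have hdense : DenseRange ((↑) : range ((↑) : ℕ → ℤ_[p]) → ℤ_[p]) := by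
    rw [DenseRange, Subtype.range_coe]
    exact PadicInt.denseRange_natCast
  refine ⟨_, (uniformContinuous_uniformly_extend hind hdense hv).continuous, fun m => ?_⟩
  simpa [e] using uniformly_extend_of_ind hind hdense hv (e m)

theorem exists_padicInt_interpolation_of_lipschitzOnWith_sub {p : ℕ} [Fact p.Prime] {E : Type*}
    [NormedAddCommGroup E] [NormedSpace ℚ_[p] E] [IsUltrametricDist E] [CompleteSpace E]
    {f : E → E} {S : Set E} (hSc : IsClosed S) (hS : MapsTo f S S) {ρ : ℝ≥0} (hρ : ρ < 1)
    (hf : LipschitzOnWith ρ (fun x => f x - x) S) {ε : ℝ} (hε : ∀ x ∈ S, ‖f x - x‖ ≤ ε)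
    {x : E} (hx : x ∈ S) :
    ∃ g : ℤ_[p] → E, Continuous g ∧ (∀ m : ℕ, g m = f^[m] x) ∧ (∀ z, g z ∈ S) ∧
      ∀ z, g (z + 1) = f (g z) := by
  have hκ : max (ρ : ℝ) ‖(p : ℚ_[p])‖ < 1 := max_lt hρ Padic.norm_p_lt_one
  have hκε : Tendsto (fun s => max (ρ : ℝ) ‖(p : ℚ_[p])‖ ^ s * ε) atTop (𝓝 0) := by
    simpa using (tendsto_pow_atTop_nhds_zero_of_lt_one (by positivity) hκ).mul_const ε
  obtain ⟨g, hg, hgm⟩ := PadicInt.exists_continuous_natCast_eq (p := p) (fun m => f^[m] x)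
    fun δ hδ => by
      obtain ⟨s, hs⟩ := (hκε.eventually (gt_mem_nhds hδ)).exists
      exact ⟨s, fun m t => (dist_eq_norm _ _).trans_le
        (norm_iterate_add_pow_mul_sub_le hS hρ.le hf hε p s m t hx) |>.trans_lt hs⟩
  have hgS : ∀ z, g z ∈ S := fun z =>
    PadicInt.denseRange_natCast.induction_on z (hSc.preimage hg) fun m =>
      (hgm m).symm ▸ hS.iterate m hx
  refine ⟨g, hg, hgm, hgS, fun z => ?_⟩
  have hfg : Continuous (f ∘ g) := (hf.of_sub_id hρ.le).continuousOn.comp_continuous hg hgS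
  refine congrFun (PadicInt.denseRange_natCast.equalizer (hg.comp (continuous_add_const 1)) hfg
    (funext fun m => ?_)) z
  change g ((m : ℤ_[p]) + 1) = f (g m)
  rw [← Nat.cast_succ, hgm, hgm]
  exact iterate_succ_apply' f m x

theorem exists_continuous_orbit_interpolation_general (p : ℕ) [Fact p.Prime] (K : Type*)
    [NontriviallyNormedField K] [NormedAlgebra ℚ_[p] K] [FiniteDimensional ℚ_[p] K]
    [IsUltrametricDist K] (n : ℕ) (r : K) (hr : ‖r‖ < 1)
    (a : Fin n → (Fin n →₀ ℕ) → K)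
    (φ : (Fin n → K) → (Fin n → K))
    (heval : ∀ x : Fin n → K, (∀ j, ‖x j‖ ≤ 1) → ∀ i : Fin n,
      HasSum (fun d : Fin n →₀ ℕ => a i d * ∏ j, x j ^ d j) (φ x i))
    (hcong : ∀ x : Fin n → K, (∀ j, ‖x j‖ ≤ 1) → ∀ i : Fin n, ‖φ x i - x i‖ < 1)
    (hdiv : ∀ (i : Fin n) (d : Fin n →₀ ℕ), 1 < d.sum (fun _ m => m) →
      ∃ c : K, ‖c‖ ≤ 1 ∧ a i d = r ^ (d.sum (fun _ m => m) - 1) * c)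
    (ω : Fin n → K) (hω : ∀ i, ‖ω i‖ ≤ 1) :
    ∃ g : ℤ_[p] → Fin n → K, Continuous g ∧ g 0 = ω ∧
      (∀ z : ℤ_[p], g (z + 1) = φ (g z)) ∧ ∀ z : ℤ_[p], ∀ i : Fin n, ‖g z i‖ ≤ 1 := by
  have hball : ∀ x : Fin n → K, x ∈ closedBall 0 1 ↔ ∀ j, ‖x j‖ ≤ 1 := fun x => by
    rw [mem_closedBall_zero_iff, pi_norm_le_iff_of_nonneg zero_le_one]
  have hcoeff : ∀ i d, 1 < d.degree → ‖a i d‖ ≤ ‖r‖ := fun i d hd => by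
    obtain ⟨c, hc, hac⟩ := hdiv i d hd
    rw [hac, norm_mul, norm_pow]
    exact (mul_le_of_le_one_right (by positivity) hc).trans
      (pow_le_of_le_one (norm_nonneg r) hr.le (Nat.sub_ne_zero_of_lt hd))
  obtain ⟨ρ, hρ1, hρ⟩ := exists_lt_one_lipschitzOnWith_sub_of_hasSum hr
    (fun x hx => heval x ((hball x).1 (mem_closedBall_zero_iff.2 hx)))
    (fun x hx => hcong x ((hball x).1 (mem_closedBall_zero_iff.2 hx))) hcoeff
  have hstep : ∀ x ∈ closedBall (0 : Fin n → K) 1, ‖φ x - x‖ ≤ 1 := fun x hx =>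
    (pi_norm_le_iff_of_nonneg zero_le_one).2 fun i => (hcong x ((hball x).1 hx) i).le
  have : CompleteSpace K := FiniteDimensional.complete ℚ_[p] K
  obtain ⟨g, hg, hgm, hgS, hgφ⟩ := exists_padicInt_interpolation_of_lipschitzOnWith_sub (p := p)
    isClosed_closedBall (IsUltrametricDist.mapsTo_closedBall_of_norm_sub_le hstep) hρ1 hρ hstep
    ((hball ω).2 hω)
  exact ⟨g, hg, by simpa using hgm 0, hgφ, fun z => (hball _).1 (hgS z)⟩

/-- Interpolation of orbits (Bell–Ghioca–Tucker, adapted): let `K` be a finite extension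
of `ℚ_p` with ring of integers `O = {x : K, ‖x‖ ≤ 1}` and uniformizer `r`. If
`φ : O^n → O^n` is given by power series `φ_i` with integral coefficients `a i d`
satisfying `φ_i(x) ≡ x_i mod 𝔪` and with the coefficient of the monomial of
multidegree `d` divisible by `r^{|d|-1}` whenever `|d| > 1`, then for any `ω ∈ O^n`
there is a continuous `g : ℤ_p → O^n` with `g(0) = ω` and `g(z+1) = φ(g(z))`. -/
theorem exists_continuous_orbit_interpolation (p : ℕ) [Fact p.Prime] (K : Type*)
    [NontriviallyNormedField K] [NormedAlgebra ℚ_[p] K] [FiniteDimensional ℚ_[p] K]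
    [IsUltrametricDist K] (n : ℕ) (r : K) (hr0 : r ≠ 0) (hr : ‖r‖ < 1)
    (a : Fin n → (Fin n →₀ ℕ) → K) (ha : ∀ i d, ‖a i d‖ ≤ 1)
    (φ : (Fin n → K) → (Fin n → K))
    (heval : ∀ x : Fin n → K, (∀ j, ‖x j‖ ≤ 1) → ∀ i : Fin n,
      HasSum (fun d : Fin n →₀ ℕ => a i d * ∏ j, x j ^ d j) (φ x i))
    (hcong : ∀ x : Fin n → K, (∀ j, ‖x j‖ ≤ 1) → ∀ i : Fin n, ‖φ x i - x i‖ < 1)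
    (hdiv : ∀ (i : Fin n) (d : Fin n →₀ ℕ), 1 < d.sum (fun _ m => m) →
      ∃ c : K, ‖c‖ ≤ 1 ∧ a i d = r ^ (d.sum (fun _ m => m) - 1) * c)
    (ω : Fin n → K) (hω : ∀ i, ‖ω i‖ ≤ 1) :
    ∃ g : ℤ_[p] → Fin n → K, Continuous g ∧ g 0 = ω ∧
      (∀ z : ℤ_[p], g (z + 1) = φ (g z)) ∧ ∀ z : ℤ_[p], ∀ i : Fin n, ‖g z i‖ ≤ 1 :=
  exists_continuous_orbit_interpolation_general p K n r hr a φ heval hcong hdiv ω hω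
end

section
/- Suppose g : Z_p → O^n is continuous, analytic on p^l Z_p, and satisfies g(z+1) = ψ(g(z)) for a map ψ : O^n → O^n. If the orbit {ψ^m(ω)}_{m∈ℕ} of ω = g(0) is finite, then ψ^{p^l}(ω) = ω. -/
/-!
Since `ℕ` is dense in `ℤ_p` and `g` is continuous, `g` takes values in the finite orbit, so it is
constant near `0`. Each coordinate of `z ↦ g (p^l z)` is a power series of radius at least `1`
(it converges at `z = 1`) which takes the value `g 0` at the points `p^j → 0`; by the principle of
isolated zeros it is the constant series, so `ψ^[p^l] ω = g (p^l) = g 0 = ω`.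
-/

open Filter Topology FormalMultilinearSeries

theorem Continuous.eventually_eq_of_finite_range {X Y : Type*} [TopologicalSpace X]
    [TopologicalSpace Y] [T1Space Y] {f : X → Y} (hf : Continuous f)
    (hfin : (Set.range f).Finite) (x : X) : ∀ᶠ y in 𝓝 x, f y = f x := by
  have hopen : IsOpen (f ⁻¹' (Set.range f \ {f x})ᶜ) :=
    (hfin.sdiff.isClosed).isOpen_compl.preimage hf
  filter_upwards [hopen.mem_nhds (by simp)] with y hy
  simpa using hy

theorem PadicInt.range_subset_of_forall_natCast_mem {p : ℕ} [Fact p.Prime] {X : Type*}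
    [TopologicalSpace X] {f : ℤ_[p] → X} (hf : Continuous f) {s : Set X} (hs : IsClosed s)
    (h : ∀ m : ℕ, f m ∈ s) : Set.range f ⊆ s :=
  (hf.range_subset_closure_image_dense PadicInt.denseRange_natCast).trans <|
    closure_minimal (by rintro _ ⟨_, ⟨m, rfl⟩, rfl⟩; exact h m) hs

theorem FormalMultilinearSeries.one_le_radius_ofScalars_of_summable {𝕜 : Type*}
    [NontriviallyNormedField 𝕜] {a : ℕ → 𝕜} (ha : Summable a) :
    1 ≤ (ofScalars 𝕜 a).radius := by
  simpa using (ofScalars 𝕜 a).le_radius_of_tendsto (r := 1) (l := 0)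
    (by simpa [ofScalars_norm] using ha.tendsto_atTop_zero.norm)

theorem eq_single_zero_of_frequently_hasSum_mul_pow {𝕜 : Type*} [NontriviallyNormedField 𝕜]
    [CompleteSpace 𝕜] {a : ℕ → 𝕜} {c : 𝕜} (hr : 0 < (ofScalars 𝕜 a).radius)
    (h : ∃ᶠ x in 𝓝[≠] 0, HasSum (fun m => a m * x ^ m) c) : a = Pi.single 0 c := by
  set P := ofScalars 𝕜 a
  have hP : HasFPowerSeriesAt P.sum P 0 := (P.hasFPowerSeriesOnBall hr).hasFPowerSeriesAt
  have hsum : ∀ᶠ x in 𝓝 0, HasSum (fun m => a m * x ^ m) (P.sum x) := by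
    filter_upwards [hP.eventually_hasSum] with x hx
    simpa [P, ofScalars_apply_eq, mul_comm] using hx
  have hfreq : ∃ᶠ x in 𝓝[≠] 0, P.sum x = c :=
    (h.and_eventually (nhdsWithin_le_nhds hsum)).mono fun _ hx => hx.2.unique hx.1
  have hconst : P.sum =ᶠ[𝓝 0] fun _ => c :=
    (hP.analyticAt.frequently_eq_iff_eventually_eq analyticAt_const).1 hfreq
  have hPconst : P = constFormalMultilinearSeries 𝕜 𝕜 c :=
    hP.eq_formalMultilinearSeries (hasFPowerSeriesAt_const.congr hconst.symm)
  funext m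
  rw [← coeff_ofScalars (p := a), show ofScalars 𝕜 a = _ from hPconst]
  cases m <;> simp [coeff]

theorem tendsto_pow_atTop_nhdsNE_zero_of_norm_lt_one {R : Type*} [NormedRing R]
    [NoZeroDivisors R] {x : R} (h0 : x ≠ 0) (h1 : ‖x‖ < 1) :
    Tendsto (x ^ ·) atTop (𝓝[≠] 0) :=
  tendsto_nhdsWithin_iff.2
    ⟨tendsto_pow_atTop_nhds_zero_of_norm_lt_one h1, .of_forall fun _ => pow_ne_zero _ h0⟩

theorem periodic_of_finite_orbit_of_analytic_interpolation_general (p : ℕ) [Fact p.Prime]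
    (K : Type*) [NontriviallyNormedField K] [NormedAlgebra ℚ_[p] K]
    [FiniteDimensional ℚ_[p] K] (n l : ℕ)
    (ψ : (Fin n → K) → (Fin n → K)) (g : ℤ_[p] → Fin n → K) (hcont : Continuous g)
    (a : Fin n → ℕ → K)
    (han : ∀ z : ℤ_[p], ∀ i : Fin n,
      HasSum (fun m : ℕ => a i m * (algebraMap ℚ_[p] K (z : ℚ_[p])) ^ m)
        (g ((p : ℤ_[p]) ^ l * z) i))
    (horb : ∀ m : ℕ, g (m : ℤ_[p]) = ψ^[m] (g 0))
    (hfin : (Set.range fun m : ℕ => ψ^[m] (g 0)).Finite) :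
    ψ^[p ^ l] (g 0) = g 0 := by
  have : CompleteSpace K := FiniteDimensional.complete ℚ_[p] K
  have hrange : Set.range g ⊆ Set.range fun m : ℕ => ψ^[m] (g 0) :=
    PadicInt.range_subset_of_forall_natCast_mem hcont hfin.isClosed fun m => ⟨m, (horb m).symm⟩
  have hloc : ∀ᶠ z in 𝓝 0, g z = g 0 := hcont.eventually_eq_of_finite_range (hfin.subset hrange) 0
  have hpow : Tendsto (fun j : ℕ => (p : ℤ_[p]) ^ l * p ^ j) atTop (𝓝 0) := by
    simpa using (tendsto_pow_atTop_nhds_zero_of_norm_lt_one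
      (PadicInt.norm_natCast_lt_one_iff.2 dvd_rfl)).const_mul ((p : ℤ_[p]) ^ l)
  have hpK : ‖(p : K)‖ = ‖(p : ℚ_[p])‖ := by
    rw [← map_natCast (algebraMap ℚ_[p] K), norm_algebraMap']
  have hpK0 : (p : K) ≠ 0 := norm_ne_zero_iff.1 (by simp [hpK, (Fact.out : p.Prime).ne_zero])
  have hpK_pow := tendsto_pow_atTop_nhdsNE_zero_of_norm_lt_one hpK0 (hpK ▸ Padic.norm_p_lt_one)
  have hcoef : ∀ i, a i = Pi.single 0 (g 0 i) := by
    intro i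
    refine eq_single_zero_of_frequently_hasSum_mul_pow
      ((one_le_radius_ofScalars_of_summable (by simpa using (han 1 i).summable)).trans_lt' one_pos)
      (hpK_pow.frequently (Eventually.frequently ?_))
    filter_upwards [hpow.eventually (hloc.mono fun z hz => congrFun hz i)] with j hj
    simpa [hj] using han (p ^ j) i
  funext i
  calc ψ^[p ^ l] (g 0) i = g ((p : ℤ_[p]) ^ l * 1) i := by rw [← horb, mul_one, Nat.cast_pow]
    _ = g 0 i := (han 1 i).unique (by simpa [hcoef i] using hasSum_pi_single 0 (g 0 i))

/-- If `g : ℤ_p → O^n` is continuous, analytic on `p^l ℤ_p` (each coordinate of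
`z ↦ g(p^l z)` is given by a convergent power series), interpolates the orbit of
`ω = g(0)` under `ψ`, and this orbit is finite, then `ψ^{p^l}(ω) = ω`. -/
theorem periodic_of_finite_orbit_of_analytic_interpolation (p : ℕ) [Fact p.Prime]
    (K : Type*) [NontriviallyNormedField K] [NormedAlgebra ℚ_[p] K]
    [FiniteDimensional ℚ_[p] K] (n l : ℕ) (hl : 1 ≤ l)
    (ψ : (Fin n → K) → (Fin n → K)) (g : ℤ_[p] → Fin n → K) (hcont : Continuous g)
    (hbdd : ∀ z : ℤ_[p], ∀ i : Fin n, ‖g z i‖ ≤ 1)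
    (a : Fin n → ℕ → K)
    (han : ∀ z : ℤ_[p], ∀ i : Fin n,
      HasSum (fun m : ℕ => a i m * (algebraMap ℚ_[p] K (z : ℚ_[p])) ^ m)
        (g ((p : ℤ_[p]) ^ l * z) i))
    (horb : ∀ m : ℕ, g (m : ℤ_[p]) = ψ^[m] (g 0))
    (hfin : (Set.range fun m : ℕ => ψ^[m] (g 0)).Finite) :
    ψ^[p ^ l] (g 0) = g 0 :=
  periodic_of_finite_orbit_of_analytic_interpolation_general p K n l ψ g hcont a han horb hfin
end

section
/- Let g : Z_p → K be continuous and analytic on p^l Z_p (K a finite extension of Q_p). If g takes some value at infinitely many points of p^l ℕ := {p^l m : m ∈ ℕ}, then g is constant on p^l Z_p. -/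
/-!
Subtracting `c` from the constant term, `x ↦ ∑ (aₘ - c δₘ₀) xᵐ` is a power series over `K` whose
coefficients tend to `0` and which vanishes at the infinitely many points `m ∈ ℕ ⊆ ℤ_p` of the
closed unit ball of `K`. By Strassmann's theorem such a series is zero: if `N` is the last index
at which `‖bₘ‖` is maximal, then for `N = 0` the constant term dominates every other term on the
unit ball, so there is no zero; and for `N > 0` every zero `x₀` splits off a factor `x - x₀`,
leaving a series of the same kind with index `N - 1`.
-/

open Filter Topology

theorem Filter.Tendsto.comp_add_right_cofinite {α : Type*} {l : Filter α} {f : ℕ → α}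
    (hf : Tendsto f cofinite l) (k : ℕ) : Tendsto (fun m => f (m + k)) cofinite l :=
  hf.comp (add_left_injective k).tendsto_cofinite

theorem exists_forall_norm_le_of_tendsto_zero {ι E : Type*} [SeminormedAddGroup E] [Nonempty ι]
    {f : ι → E} (hf : Tendsto f cofinite (𝓝 0)) : ∃ j, ∀ i, ‖f i‖ ≤ ‖f j‖ := by
  by_cases h : ∃ i₀, 0 < ‖f i₀‖
  · obtain ⟨i₀, hi₀⟩ := h
    have hnorm : Tendsto (fun i => ‖f i‖) cofinite (𝓝 0) := tendsto_norm_zero.comp hf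
    have hfin : {i | ‖f i₀‖ ≤ ‖f i‖}.Finite := by
      simpa only [not_lt] using eventually_cofinite.mp (hnorm.eventually_lt_const hi₀)
    obtain ⟨j, hj, hjmax⟩ :=
      Set.exists_max_image _ (‖f ·‖) hfin ⟨i₀, (le_refl _ : ‖f i₀‖ ≤ ‖f i₀‖)⟩
    refine ⟨j, fun i => ?_⟩
    rcases le_or_gt ‖f i₀‖ ‖f i‖ with hi | hi
    · exact hjmax i hi
    · exact hi.le.trans hj
  · push Not at h
    obtain ⟨j⟩ := ‹Nonempty ι›
    exact ⟨j, fun i => (h i).trans (norm_nonneg _)⟩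

namespace IsUltrametricDist

variable {ι E : Type*} [NormedAddCommGroup E] [IsUltrametricDist E]

theorem norm_tsum_lt_of_forall_lt [Nonempty ι] {f : ι → E} (hf : Summable f) {C : ℝ}
    (h : ∀ i, ‖f i‖ < C) : ‖∑' i, f i‖ < C := by
  obtain ⟨j, hj⟩ := exists_forall_norm_le_of_tendsto_zero hf.tendsto_cofinite_zero
  exact (norm_tsum_le_of_forall_le hj).trans_lt (h j)

theorem norm_eq_of_hasSum_of_norm_lt {f : ℕ → E} {s : E} (hf : HasSum f s)
    (h : ∀ n, ‖f (n + 1)‖ < ‖f 0‖) : ‖s‖ = ‖f 0‖ := by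
  have htail : HasSum (fun n => f (n + 1)) (s - f 0) := by
    simpa using (hasSum_nat_add_iff' 1).mpr hf
  have hlt : ‖s - f 0‖ < ‖f 0‖ := htail.tsum_eq ▸ norm_tsum_lt_of_forall_lt htail.summable h
  rw [← add_sub_cancel (f 0) s, norm_add_eq_max_of_norm_ne_norm hlt.ne', max_eq_left hlt.le]

end IsUltrametricDist

section PowerSeries

open IsUltrametricDist

variable {K : Type*} [NormedField K] {b : ℕ → K} {x x₀ : K}

theorem norm_mul_pow_le_of_norm_le_one (hx : ‖x‖ ≤ 1) (y : K) (m : ℕ) : ‖y * x ^ m‖ ≤ ‖y‖ := by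
  rw [norm_mul, norm_pow]
  exact mul_le_of_le_one_right (norm_nonneg y) (pow_le_one₀ (norm_nonneg x) hx)

structure IsStrassmannIndex (b : ℕ → K) (N : ℕ) : Prop where
  ne_zero : b N ≠ 0
  norm_le : ∀ m, ‖b m‖ ≤ ‖b N‖
  norm_lt : ∀ m, N < m → ‖b m‖ < ‖b N‖

theorem exists_isStrassmannIndex (hb : Tendsto b cofinite (𝓝 0)) (hne : b ≠ 0) :
    ∃ N, IsStrassmannIndex b N := by
  obtain ⟨j, hj⟩ := exists_forall_norm_le_of_tendsto_zero hb
  have hjpos : 0 < ‖b j‖ := by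
    obtain ⟨m, hm⟩ := Function.ne_iff.mp hne
    exact (norm_pos_iff.mpr hm).trans_le (hj m)
  have hfin : {m | ‖b j‖ ≤ ‖b m‖}.Finite := by
    have hnorm : Tendsto (fun m => ‖b m‖) cofinite (𝓝 0) := tendsto_norm_zero.comp hb
    simpa only [not_lt] using eventually_cofinite.mp (hnorm.eventually_lt_const hjpos)
  obtain ⟨N, hN, hNmax⟩ := Set.exists_max_image _ id hfin ⟨j, (le_refl _ : ‖b j‖ ≤ ‖b j‖)⟩
  have hNj : ‖b N‖ = ‖b j‖ := (hj N).antisymm hN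
  refine ⟨N, norm_ne_zero_iff.mp (hNj ▸ hjpos.ne'), fun m => hNj ▸ hj m, fun m hm => ?_⟩
  rw [hNj]
  by_contra! h
  exact hm.not_ge (hNmax m h)

variable [IsUltrametricDist K] [CompleteSpace K]

theorem summable_mul_pow_of_tendsto_zero (hb : Tendsto b cofinite (𝓝 0)) (hx : ‖x‖ ≤ 1) :
    Summable fun m => b m * x ^ m :=
  NonarchimedeanAddGroup.summable_of_tendsto_cofinite_zero <|
    squeeze_zero_norm (fun m => norm_mul_pow_le_of_norm_le_one hx (b m) m)
      (tendsto_norm_zero.comp hb)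

theorem tsum_comp_add_mul_pow_eq (hb : Tendsto b cofinite (𝓝 0)) (hx : ‖x‖ ≤ 1) (k : ℕ) :
    ∑' m, b (m + k) * x ^ m = b k + x * ∑' m, b (m + (k + 1)) * x ^ m := by
  rw [(summable_mul_pow_of_tendsto_zero (hb.comp_add_right_cofinite k) hx).tsum_eq_zero_add,
    ← tsum_mul_left]
  congr 1
  · simp
  · refine tsum_congr fun m => ?_
    rw [show m + 1 + k = m + (k + 1) by omega]
    ring

/-- The coefficients of `(∑ bₘ Xᵐ - ∑ bₘ x₀ᵐ) / (X - x₀)`. -/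
noncomputable def divXSubCoeff (b : ℕ → K) (x₀ : K) (n : ℕ) : K :=
  ∑' m, b (m + (n + 1)) * x₀ ^ m

theorem tendsto_divXSubCoeff (hb : Tendsto b cofinite (𝓝 0)) (hx₀ : ‖x₀‖ ≤ 1) :
    Tendsto (divXSubCoeff b x₀) cofinite (𝓝 0) := by
  rw [NormedAddGroup.tendsto_nhds_zero]
  intro ε hε
  have hbε : ∀ᶠ k in cofinite, ‖b k‖ < ε := NormedAddGroup.tendsto_nhds_zero.mp hb ε hε
  rw [Nat.cofinite_eq_atTop] at hbε
  obtain ⟨M, hM⟩ := eventually_atTop.mp hbε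
  rw [Nat.cofinite_eq_atTop, eventually_atTop]
  refine ⟨M, fun n hn => ?_⟩
  have hs : Summable fun m => b (m + (n + 1)) * x₀ ^ m :=
    summable_mul_pow_of_tendsto_zero (hb.comp_add_right_cofinite _) hx₀
  exact norm_tsum_lt_of_forall_lt hs fun m =>
    (norm_mul_pow_le_of_norm_le_one hx₀ _ m).trans_lt (hM (m + (n + 1)) (by omega))

theorem tsum_mul_pow_sub_tsum_mul_pow (hb : Tendsto b cofinite (𝓝 0)) (hx₀ : ‖x₀‖ ≤ 1)
    (hx : ‖x‖ ≤ 1) :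
    ∑' m, b m * x ^ m - ∑' m, b m * x₀ ^ m =
      (∑' n, divXSubCoeff b x₀ n * x ^ n) * (x - x₀) := by
  set c := divXSubCoeff b x₀
  set S := ∑' n, c n * x ^ n
  have hS : HasSum (fun n => c n * x ^ n) S :=
    (summable_mul_pow_of_tendsto_zero (tendsto_divXSubCoeff hb hx₀) hx).hasSum
  have hrec (n : ℕ) : b (n + 1) = c n - x₀ * c (n + 1) := by
    simp only [c, divXSubCoeff, tsum_comp_add_mul_pow_eq hb hx₀ (n + 1)]
    ring
  have hsucc : HasSum (fun n => b (n + 1) * x ^ (n + 1)) (S * x - x₀ * (S - c 0)) := by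
    have hshift := ((hasSum_nat_add_iff' 1).mpr hS).mul_left x₀
    simp only [Finset.sum_range_one, pow_zero, mul_one] at hshift
    have hterm : (fun n => b (n + 1) * x ^ (n + 1)) =
        fun n => c n * x ^ n * x - x₀ * (c (n + 1) * x ^ (n + 1)) := by
      funext n
      rw [hrec n]
      ring
    rw [hterm]
    exact (hS.mul_right x).sub hshift
  have hBx : ∑' m, b m * x ^ m = b 0 + (S * x - x₀ * (S - c 0)) := by
    rw [(summable_mul_pow_of_tendsto_zero hb hx).tsum_eq_zero_add, hsucc.tsum_eq, pow_zero,
      mul_one]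
  have hBx₀ : ∑' m, b m * x₀ ^ m = b 0 + x₀ * c 0 := by
    have h := tsum_comp_add_mul_pow_eq hb hx₀ 0
    simp only [add_zero] at h
    exact h
  rw [hBx, hBx₀]
  ring

theorem IsStrassmannIndex.norm_tsum_mul_pow_eq (h : IsStrassmannIndex b 0)
    (hb : Tendsto b cofinite (𝓝 0)) (hx : ‖x‖ ≤ 1) :
    ‖∑' m, b m * x ^ m‖ = ‖b 0‖ := by
  have := norm_eq_of_hasSum_of_norm_lt (summable_mul_pow_of_tendsto_zero hb hx).hasSum fun n =>
    (norm_mul_pow_le_of_norm_le_one hx _ _).trans_lt (by simpa using h.norm_lt (n + 1) n.succ_pos)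
  simpa using this

theorem IsStrassmannIndex.divXSubCoeff {N : ℕ} (h : IsStrassmannIndex b (N + 1))
    (hb : Tendsto b cofinite (𝓝 0)) (hx₀ : ‖x₀‖ ≤ 1) :
    IsStrassmannIndex (_root_.divXSubCoeff b x₀) N := by
  set q := _root_.divXSubCoeff b x₀
  have hs (n : ℕ) : HasSum (fun m => b (m + (n + 1)) * x₀ ^ m) (q n) :=
    (summable_mul_pow_of_tendsto_zero (hb.comp_add_right_cofinite _) hx₀).hasSum
  have hN : ‖q N‖ = ‖b (N + 1)‖ := by
    have := norm_eq_of_hasSum_of_norm_lt (hs N) fun m =>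
      (norm_mul_pow_le_of_norm_le_one hx₀ _ _).trans_lt
        (by simpa using h.norm_lt (m + 1 + (N + 1)) (by omega))
    simpa using this
  refine ⟨norm_ne_zero_iff.mp (hN ▸ norm_ne_zero_iff.mpr h.ne_zero), fun n => ?_, fun n hn => ?_⟩
  · rw [hN, ← (hs n).tsum_eq]
    exact norm_tsum_le_of_forall_le fun m =>
      (norm_mul_pow_le_of_norm_le_one hx₀ _ _).trans (h.norm_le _)
  · rw [hN, ← (hs n).tsum_eq]
    exact norm_tsum_lt_of_forall_lt (hs n).summable fun m =>
      (norm_mul_pow_le_of_norm_le_one hx₀ _ _).trans_lt (h.norm_lt _ (by omega))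

theorem IsStrassmannIndex.finite_zeros {N : ℕ} (h : IsStrassmannIndex b N)
    (hb : Tendsto b cofinite (𝓝 0)) :
    {x : K | ‖x‖ ≤ 1 ∧ ∑' m, b m * x ^ m = 0}.Finite := by
  induction N generalizing b with
  | zero =>
    refine Set.finite_empty.subset fun x ⟨hx, hzero⟩ => h.ne_zero ?_
    simpa [hzero] using (h.norm_tsum_mul_pow_eq hb hx).symm
  | succ N ih =>
    rcases Set.eq_empty_or_nonempty {x : K | ‖x‖ ≤ 1 ∧ ∑' m, b m * x ^ m = 0} with
      hZ | ⟨x₀, hx₀, hzero₀⟩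
    · exact hZ ▸ Set.finite_empty
    refine ((ih (h.divXSubCoeff hb hx₀) (tendsto_divXSubCoeff hb hx₀)).insert x₀).subset ?_
    rintro x ⟨hx, hzero⟩
    have hfactor := tsum_mul_pow_sub_tsum_mul_pow hb hx₀ hx
    rw [hzero, hzero₀, sub_zero, eq_comm, mul_eq_zero, sub_eq_zero] at hfactor
    exact hfactor.elim (fun hq => Or.inr ⟨hx, hq⟩) Or.inl

theorem eq_zero_of_infinite_zeros (hb : Tendsto b cofinite (𝓝 0))
    (hZ : {x : K | ‖x‖ ≤ 1 ∧ ∑' m, b m * x ^ m = 0}.Infinite) : b = 0 := by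
  by_contra hne
  obtain ⟨N, hN⟩ := exists_isStrassmannIndex hb hne
  exact hZ (hN.finite_zeros hb)

theorem tsum_mul_pow_eq_of_infinite_fiber {c : K} (hb : Tendsto b cofinite (𝓝 0))
    (hc : {x : K | ‖x‖ ≤ 1 ∧ ∑' m, b m * x ^ m = c}.Infinite) (hx : ‖x‖ ≤ 1) :
    ∑' m, b m * x ^ m = c := by
  set δ : ℕ → K := Pi.single 0 c
  have hδ (y : K) : HasSum (fun m => δ m * y ^ m) c := by
    convert hasSum_single (f := fun m => δ m * y ^ m) 0 fun m hm => by simp [δ, hm]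
    simp [δ]
  have hsub (y : K) (hy : ‖y‖ ≤ 1) :
      ∑' m, (b - δ) m * y ^ m = ∑' m, b m * y ^ m - c := by
    simp only [Pi.sub_apply, sub_mul]
    exact ((summable_mul_pow_of_tendsto_zero hb hy).hasSum.sub (hδ y)).tsum_eq
  have hδ_tendsto : Tendsto δ cofinite (𝓝 0) :=
    tendsto_nhds_of_eventually_eq <| (eventually_cofinite_ne 0).mono fun m hm => by simp [δ, hm]
  have hbδ_tendsto : Tendsto (b - δ) cofinite (𝓝 0) := by
    have h := hb.sub hδ_tendsto
    rwa [sub_zero] at h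
  have hbδ : b - δ = 0 := by
    refine eq_zero_of_infinite_zeros hbδ_tendsto (hc.mono ?_)
    rintro y ⟨hy, hyc⟩
    exact ⟨hy, by rw [hsub y hy, hyc, sub_self]⟩
  rw [← sub_eq_zero, ← hsub x hx, hbδ]
  simp

end PowerSeries

theorem analytic_constant_of_infinitely_many_nat_values_general (p : ℕ) [Fact p.Prime]
    (K : Type*) [NontriviallyNormedField K] [NormedAlgebra ℚ_[p] K]
    [FiniteDimensional ℚ_[p] K] (l : ℕ) (g : ℤ_[p] → K)
    (a : ℕ → K)
    (han : ∀ z : ℤ_[p],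
      HasSum (fun m : ℕ => a m * (algebraMap ℚ_[p] K (z : ℚ_[p])) ^ m)
        (g ((p : ℤ_[p]) ^ l * z)))
    (c : K) (hc : {m : ℕ | g ((p : ℤ_[p]) ^ l * (m : ℤ_[p])) = c}.Infinite) :
    ∀ z w : ℤ_[p], g ((p : ℤ_[p]) ^ l * z) = g ((p : ℤ_[p]) ^ l * w) := by
  have : IsUltrametricDist K := IsUltrametricDist.of_normedAlgebra ℚ_[p]
  have : CompleteSpace K := FiniteDimensional.complete ℚ_[p] K
  set e : ℤ_[p] → K := fun z => algebraMap ℚ_[p] K z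
  have he (z : ℤ_[p]) : ‖e z‖ ≤ 1 := by
    simpa only [e, norm_algebraMap', PadicInt.padic_norm_e_of_padicInt] using z.norm_le_one
  have ha : Tendsto a cofinite (𝓝 0) := by
    simpa using (han 1).summable.tendsto_cofinite_zero
  have he_inj : Function.Injective fun m : ℕ => e m :=
    (algebraMap ℚ_[p] K).injective.comp (Nat.cast_injective (R := ℚ_[p]))
  have hfiber : {x : K | ‖x‖ ≤ 1 ∧ ∑' m, a m * x ^ m = c}.Infinite :=
    (hc.image he_inj.injOn).mono <| by
      rintro _ ⟨m, hm, rfl⟩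
      exact ⟨he m, (han m).tsum_eq.trans hm⟩
  intro z w
  rw [← (han z).tsum_eq, ← (han w).tsum_eq, tsum_mul_pow_eq_of_infinite_fiber ha hfiber (he z),
    tsum_mul_pow_eq_of_infinite_fiber ha hfiber (he w)]

/-- If `g : ℤ_p → K` is continuous, analytic on `p^l ℤ_p` (i.e. `z ↦ g(p^l z)` is given
by a power series convergent on `ℤ_p`), and takes some value `c` at infinitely many
points of `p^l ℕ`, then `g` is constant on `p^l ℤ_p`. -/
theorem analytic_constant_of_infinitely_many_nat_values (p : ℕ) [Fact p.Prime]
    (K : Type*) [NontriviallyNormedField K] [NormedAlgebra ℚ_[p] K]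
    [FiniteDimensional ℚ_[p] K] (l : ℕ) (g : ℤ_[p] → K) (hcont : Continuous g)
    (a : ℕ → K)
    (han : ∀ z : ℤ_[p],
      HasSum (fun m : ℕ => a m * (algebraMap ℚ_[p] K (z : ℚ_[p])) ^ m)
        (g ((p : ℤ_[p]) ^ l * z)))
    (c : K) (hc : {m : ℕ | g ((p : ℤ_[p]) ^ l * (m : ℤ_[p])) = c}.Infinite) :
    ∀ z w : ℤ_[p], g ((p : ℤ_[p]) ^ l * z) = g ((p : ℤ_[p]) ^ l * w) :=
  analytic_constant_of_infinitely_many_nat_values_general p K l g a han c hc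
end
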